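/- Let $\alpha \in [0,1)$ and consider a sequence $(a_t)_{t \geq 0}$ of nonnegative reals with $a_0 = 0$ satisfying the recursion $a_{t+1} \leq \frac{1+\alpha}{2} a_t + D + \frac{1-\alpha}{3}(1-\beta)\sum_{s=1}^{t} \beta^{t-s} a_s$ for all $t \geq 0$, where $D \geq 0$ and $\beta \in [0,1)$. Then $a_t \leq \frac{6D}{1-\alpha}$ for all $t \geq 0$. -/

import Mathlib

/-! The weights `(1 - β) β ^ (t - s)` of the momentum average sum to at most `1`, so if every
earlier `a s` is at most `B` the recursion bounds `a (t + 1)` by `(1 + α) / 2 * B + D + (1 - α) / 3 * B`,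
which equals `B` for `B = 6 D / (1 - α)`. Strong induction on `t` concludes. -/

open Finset

lemma sum_Icc_one_sub_eq_sum_range {M : Type*} [AddCommMonoid M] (f : ℕ → M) (t : ℕ) :
    ∑ s ∈ Icc 1 t, f (t - s) = ∑ k ∈ range t, f k := by
  refine sum_nbij' (t - ·) (t - ·) ?_ ?_ ?_ ?_ ?_ <;> intro s hs <;> simp at hs ⊢ <;> omega

section Momentum

variable {β : ℝ}

lemma sum_Icc_pow_sub_le_inv (hβ0 : 0 ≤ β) (hβ1 : β < 1) (t : ℕ) :
    ∑ s ∈ Icc 1 t, β ^ (t - s) ≤ (1 - β)⁻¹ := by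
  have h := geom_sum_Ico_le_of_lt_one (m := 0) (n := t) hβ0 hβ1
  rwa [← range_eq_Ico, pow_zero, one_div, ← sum_Icc_one_sub_eq_sum_range] at h

lemma one_sub_mul_sum_Icc_pow_sub_mul_le (hβ0 : 0 ≤ β) (hβ1 : β < 1) {a : ℕ → ℝ} {B : ℝ}
    (hB : 0 ≤ B) {t : ℕ} (ha : ∀ s ∈ Icc 1 t, a s ≤ B) :
    (1 - β) * ∑ s ∈ Icc 1 t, β ^ (t - s) * a s ≤ B := by
  have hβ' : 0 < 1 - β := sub_pos.mpr hβ1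
  calc (1 - β) * ∑ s ∈ Icc 1 t, β ^ (t - s) * a s
      ≤ (1 - β) * ((∑ s ∈ Icc 1 t, β ^ (t - s)) * B) := by
        rw [sum_mul]
        gcongr with s hs
        exact ha s hs
    _ ≤ (1 - β) * ((1 - β)⁻¹ * B) := by
        gcongr
        exact sum_Icc_pow_sub_le_inv hβ0 hβ1 t
    _ = B := by field_simp

lemma le_of_momentum_recursion (hβ0 : 0 ≤ β) (hβ1 : β < 1) {p q D B : ℝ} (hp : 0 ≤ p)
    (hq : 0 ≤ q) (hB : 0 ≤ B) (hfix : p * B + D + q * B ≤ B) {a : ℕ → ℝ} (ha0 : a 0 ≤ B)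
    (hrec : ∀ t, a (t + 1) ≤ p * a t + D + q * (1 - β) * ∑ s ∈ Icc 1 t, β ^ (t - s) * a s) :
    ∀ t, a t ≤ B := by
  intro t
  induction t using Nat.strong_induction_on with
  | _ t ih =>
    cases t with
    | zero => exact ha0
    | succ n =>
      have hlast : p * a n ≤ p * B := mul_le_mul_of_nonneg_left (ih n n.lt_succ_self) hp
      have havg : q * ((1 - β) * ∑ s ∈ Icc 1 n, β ^ (n - s) * a s) ≤ q * B :=
        mul_le_mul_of_nonneg_left (one_sub_mul_sum_Icc_pow_sub_mul_le hβ0 hβ1 hB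
          fun s hs => ih s (Nat.lt_succ_of_le (mem_Icc.mp hs).2)) hq
      linarith [hrec n, mul_assoc q (1 - β) (∑ s ∈ Icc 1 n, β ^ (n - s) * a s)]

end Momentum

theorem drift_recursion_bound_general (α β D : ℝ) (hα0 : 0 ≤ α) (hα1 : α < 1)
    (hβ0 : 0 ≤ β) (hβ1 : β < 1) (hD : 0 ≤ D)
    (a : ℕ → ℝ) (ha0 : a 0 = 0)
    (hrec : ∀ t, a (t + 1) ≤ (1 + α) / 2 * a t + D +
      (1 - α) / 3 * (1 - β) * ∑ s ∈ Finset.Icc 1 t, β ^ (t - s) * a s) :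
    ∀ t, a t ≤ 6 * D / (1 - α) := by
  have hα' : 0 < 1 - α := sub_pos.mpr hα1
  have hB : 0 ≤ 6 * D / (1 - α) := by positivity
  have hfix : (1 + α) / 2 * (6 * D / (1 - α)) + D + (1 - α) / 3 * (6 * D / (1 - α))
      = 6 * D / (1 - α) := by
    field_simp
    ring
  exact le_of_momentum_recursion hβ0 hβ1 (by linarith) (by linarith) hB hfix.le (ha0 ▸ hB) hrec

theorem drift_recursion_bound (α β D : ℝ) (hα0 : 0 ≤ α) (hα1 : α < 1)
    (hβ0 : 0 ≤ β) (hβ1 : β < 1) (hD : 0 ≤ D)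
    (a : ℕ → ℝ) (ha : ∀ t, 0 ≤ a t) (ha0 : a 0 = 0)
    (hrec : ∀ t, a (t + 1) ≤ (1 + α) / 2 * a t + D +
      (1 - α) / 3 * (1 - β) * ∑ s ∈ Finset.Icc 1 t, β ^ (t - s) * a s) :
    ∀ t, a t ≤ 6 * D / (1 - α) :=
  drift_recursion_bound_general α β D hα0 hα1 hβ0 hβ1 hD a ha0 hrec
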